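/- Let β > 0, b ∈ (0,∞), L > 0, α ≥ 0, g_k, u_k ∈ ℝ. If u ≠ 0 is a global minimizer of u ↦ g_k·u + (L/2)(u-u_k)² + (α/2)u² + β|u|₀ over {|u| ≤ b}, then (g_k + L(u - u_k) + α·u)·(v - u) ≥ 0 for all v ∈ ℝ with |v| ≤ b. -/
import Mathlib


/-- The "L⁰ norm" of a real number: 0 if `u = 0`, else 1. -/
noncomputable def nrm0 (u : ℝ) : ℝ := if u = 0 then 0 else 1

/-- A nonzero global minimizer `u` of `u ↦ g_k·u + (L/2)(u-u_k)² + (α/2)u² + β|u|₀` over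
`{|u| ≤ b}` satisfies the variational inequality
`(g_k + L(u-u_k) + αu)(v - u) ≥ 0` for all `|v| ≤ b`. -/
theorem prox_step_variational_inequality (β b L α gk uk u : ℝ)
    (hβ : 0 < β) (hb : 0 < b) (hL : 0 < L) (hα : 0 ≤ α)
    (hu : |u| ≤ b) (hu0 : u ≠ 0)
    (hmin : ∀ v : ℝ, |v| ≤ b →
      gk * u + L / 2 * (u - uk) ^ 2 + α / 2 * u ^ 2 + β * nrm0 u ≤
        gk * v + L / 2 * (v - uk) ^ 2 + α / 2 * v ^ 2 + β * nrm0 v) :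
    ∀ v : ℝ, |v| ≤ b → 0 ≤ (gk + L * (u - uk) + α * u) * (v - u) := by
  intro v hv
  -- The smooth (convex) part is minimized at u as well.
  have fmin : ∀ w : ℝ, |w| ≤ b →
      gk * u + L / 2 * (u - uk) ^ 2 + α / 2 * u ^ 2 ≤
        gk * w + L / 2 * (w - uk) ^ 2 + α / 2 * w ^ 2 := by
    intro w hw
    by_cases hw0 : w = 0
    · have h0 := hmin 0 (by simpa using hb.le)
      subst hw0
      norm_num [nrm0, hu0] at h0
      linarith
    · have h := hmin w hw
      simp only [nrm0, hu0, hw0, if_false] at h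
      linarith
  by_contra h
  push_neg at h
  set D := gk + L * (u - uk) + α * u with hD
  set a := D * (v - u) with ha
  set c := (L + α) / 2 * (v - u) ^ 2 with hc
  have hc0 : 0 ≤ c := by positivity
  set t := min (-a / (c + 1)) 1 with ht
  have ht0 : 0 < t := by
    apply lt_min _ one_pos
    apply div_pos (by linarith) (by linarith)
  have ht1 : t ≤ 1 := min_le_right _ _
  have htc : t * (c + 1) ≤ -a := by
    have : t ≤ -a / (c + 1) := min_le_left _ _
    calc t * (c + 1) ≤ (-a / (c + 1)) * (c + 1) := by nlinarith
    _ = -a := by field_simp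
  have hvt : |u + t * (v - u)| ≤ b := by
    have : u + t * (v - u) = (1 - t) * u + t * v := by ring
    rw [this]
    calc |(1 - t) * u + t * v| ≤ |(1 - t) * u| + |t * v| := abs_add_le _ _
    _ = (1 - t) * |u| + t * |v| := by
        rw [abs_mul, abs_mul, abs_of_nonneg (by linarith), abs_of_nonneg ht0.le]
    _ ≤ (1 - t) * b + t * b := by
        apply add_le_add
        · exact mul_le_mul_of_nonneg_left hu (by linarith)
        · exact mul_le_mul_of_nonneg_left hv ht0.le
    _ = b := by ring
  have key := fmin (u + t * (v - u)) hvt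
  -- f(u + t(v-u)) - f(u) = t*a + t^2*c
  have expand : 0 ≤ t * a + t ^ 2 * c := by
    have : gk * (u + t * (v - u)) + L / 2 * (u + t * (v - u) - uk) ^ 2 +
        α / 2 * (u + t * (v - u)) ^ 2 -
        (gk * u + L / 2 * (u - uk) ^ 2 + α / 2 * u ^ 2) = t * a + t ^ 2 * c := by
      rw [ha, hc, hD]; ring
    linarith
  nlinarith [mul_pos ht0 ht0]
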